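/- arXiv:math/0505238 — 12 statements merged into one kernel-verified Lean document; each statement's English description precedes it below -/
import Mathlib

section
/- If probability distributions P, Q with positive entries satisfy 0 < r ≤ p_i/q_i ≤ R for all i, with r ≤ 1 ≤ R, then Δ(P‖Q) ≤ 2(R-1)(1-r)/((R+1)(1+r)). -/
theorem stmt_4 (n : ℕ) (p q : Fin n → ℝ) (r R : ℝ)
    (hp : ∀ i, 0 < p i) (hq : ∀ i, 0 < q i)
    (hp1 : ∑ i, p i = 1) (hq1 : ∑ i, q i = 1)
    (hr : 0 < r) (hr1 : r ≤ 1) (hR1 : 1 ≤ R)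
    (hbd : ∀ i, r ≤ p i / q i ∧ p i / q i ≤ R) :
    ∑ i, (p i - q i)^2 / (p i + q i) ≤
      2 * (R - 1) * (1 - r) / ((R + 1) * (1 + r)) := by
  rcases eq_or_lt_of_le (hr1.trans hR1) with hEq | hrR
  · -- r = R forces r = R = 1, so p = q and both sides are 0
    have hR : R = 1 := le_antisymm (hEq ▸ hr1) hR1
    have hr' : r = 1 := hEq.trans hR
    have hpq : ∀ i, p i = q i := by
      intro i
      have h := hbd i
      have h1 : p i / q i = 1 := le_antisymm (hR ▸ h.2) (hr' ▸ h.1)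
      have := (div_eq_one_iff_eq (ne_of_gt (hq i))).mp h1
      exact this
    rw [hr', hR]
    simp [hpq]
  · -- main case r < R
    set D : ℝ := (R + 1) * (1 + r) * (R - r) with hD
    have hDpos : 0 < D := by
      apply mul_pos (mul_pos (by linarith) (by linarith)) (by linarith)
    have key : ∀ i, (p i - q i)^2 / (p i + q i) ≤
        ((R - 1)^2 * (1 + r) * (p i - r * q i)
          + (1 - r)^2 * (R + 1) * (R * q i - p i)) / D := by
      intro i
      have hqi := hq i
      have hpi := hp i
      have h1 : r * q i ≤ p i := by
        have := (hbd i).1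
        rw [le_div_iff₀ hqi] at this
        linarith
      have h2 : p i ≤ R * q i := by
        have := (hbd i).2
        rw [div_le_iff₀ hqi] at this
        linarith
      rw [div_le_div_iff₀ (by linarith) hDpos]
      nlinarith [mul_nonneg (mul_nonneg (le_of_lt (sub_pos.mpr hrR))
        (sub_nonneg.mpr h1)) (sub_nonneg.mpr h2)]
    calc ∑ i, (p i - q i)^2 / (p i + q i)
        ≤ ∑ i, ((R - 1)^2 * (1 + r) * (p i - r * q i)
          + (1 - r)^2 * (R + 1) * (R * q i - p i)) / D :=
          Finset.sum_le_sum fun i _ => key i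
      _ = (((R - 1)^2 * (1 + r) - (1 - r)^2 * (R + 1)) / D) * (∑ i, p i)
          + ((- (R - 1)^2 * (1 + r) * r + (1 - r)^2 * (R + 1) * R) / D) * (∑ i, q i) := by
          rw [Finset.mul_sum, Finset.mul_sum, ← Finset.sum_add_distrib]
          apply Finset.sum_congr rfl
          intro i _
          field_simp
          ring
      _ = 2 * (R - 1) * (1 - r) / ((R + 1) * (1 + r)) := by
          rw [hp1, hq1]
          have h1 : (R + 1 : ℝ) ≠ 0 := by linarith
          have h2 : (1 + r : ℝ) ≠ 0 := by linarith
          have h3 : (R - r : ℝ) ≠ 0 := by linarith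
          field_simp
          ring
end

section
/- If P, Q are probability distributions with positive entries satisfying 0 < r ≤ p_i/q_i ≤ R for all i, with r ≤ 1 ≤ R, then (4r³/(r+1)³)·χ²(Q‖P) ≤ Δ(P‖Q) ≤ (4R³/(R+1)³)·χ²(Q‖P), where χ²(Q‖P) = ∑ (q_i - p_i)²/p_i. -/
lemma aux_lo (p q r : ℝ) (hp : 0 < p) (hq : 0 < q) (hr : 0 < r) (hr1 : r ≤ 1)
    (h : r * q ≤ p) :
    4 * r^3 / (r + 1)^3 * ((q - p)^2 / p) ≤ (p - q)^2 / (p + q) := by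
  have key : 4 * r^3 * (p + q) ≤ (r + 1)^3 * p := by
    nlinarith [mul_nonneg (sq_nonneg r) (sub_nonneg.2 h),
      mul_nonneg (mul_nonneg (mul_nonneg (sub_nonneg.2 hr1)
        (by positivity : (0:ℝ) ≤ 3*r+1)) (by positivity : (0:ℝ) ≤ r+1)) hp.le]
  rw [div_mul_div_comm, div_le_div_iff₀ (by positivity) (by positivity)]
  nlinarith [mul_le_mul_of_nonneg_left key (sq_nonneg (p - q))]

lemma aux_hi (p q R : ℝ) (hp : 0 < p) (hq : 0 < q) (hR1 : 1 ≤ R)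
    (h : p ≤ R * q) :
    (p - q)^2 / (p + q) ≤ 4 * R^3 / (R + 1)^3 * ((q - p)^2 / p) := by
  have hR : 0 < R := lt_of_lt_of_le one_pos hR1
  have key : (R + 1)^3 * p ≤ 4 * R^3 * (p + q) := by
    nlinarith [mul_nonneg (sq_nonneg R) (sub_nonneg.2 h),
      mul_nonneg (mul_nonneg (mul_nonneg (sub_nonneg.2 hR1)
        (by positivity : (0:ℝ) ≤ 3*R+1)) (by positivity : (0:ℝ) ≤ R+1)) hp.le]
  rw [div_mul_div_comm, div_le_div_iff₀ (by positivity) (by positivity)]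
  nlinarith [mul_le_mul_of_nonneg_left key (sq_nonneg (p - q))]

theorem stmt_5 (n : ℕ) (p q : Fin n → ℝ) (r R : ℝ)
    (hp : ∀ i, 0 < p i) (hq : ∀ i, 0 < q i)
    (hp1 : ∑ i, p i = 1) (hq1 : ∑ i, q i = 1)
    (hr : 0 < r) (hr1 : r ≤ 1) (hR1 : 1 ≤ R)
    (hbd : ∀ i, r ≤ p i / q i ∧ p i / q i ≤ R) :
    4 * r^3 / (r + 1)^3 * ∑ i, (q i - p i)^2 / p i ≤
      ∑ i, (p i - q i)^2 / (p i + q i) ∧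
    ∑ i, (p i - q i)^2 / (p i + q i) ≤
      4 * R^3 / (R + 1)^3 * ∑ i, (q i - p i)^2 / p i := by
  constructor
  · rw [Finset.mul_sum]
    apply Finset.sum_le_sum
    intro i _
    exact aux_lo _ _ _ (hp i) (hq i) hr hr1 ((le_div_iff₀ (hq i)).mp (hbd i).1)
  · rw [Finset.mul_sum]
    apply Finset.sum_le_sum
    intro i _
    exact aux_hi _ _ _ (hp i) (hq i) hR1 ((div_le_iff₀ (hq i)).mp (hbd i).2)
end

section
/- If P, Q are probability distributions with positive entries satisfying 0 < r ≤ p_i/q_i ≤ R for all i, with r ≤ 1 ≤ R, then (4/(R+1)³)·χ²(P‖Q) ≤ Δ(P‖Q) ≤ (4/(r+1)³)·χ²(P‖Q), where χ²(P‖Q) = ∑ (p_i - q_i)²/q_i. -/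
theorem stmt_6 (n : ℕ) (p q : Fin n → ℝ) (r R : ℝ)
    (hp : ∀ i, 0 < p i) (hq : ∀ i, 0 < q i)
    (hp1 : ∑ i, p i = 1) (hq1 : ∑ i, q i = 1)
    (hr : 0 < r) (hr1 : r ≤ 1) (hR1 : 1 ≤ R)
    (hbd : ∀ i, r ≤ p i / q i ∧ p i / q i ≤ R) :
    4 / (R + 1)^3 * ∑ i, (p i - q i)^2 / q i ≤
      ∑ i, (p i - q i)^2 / (p i + q i) ∧
    ∑ i, (p i - q i)^2 / (p i + q i) ≤
      4 / (r + 1)^3 * ∑ i, (p i - q i)^2 / q i := by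
  constructor
  · rw [Finset.mul_sum]
    apply Finset.sum_le_sum
    intro i _
    have hqi := hq i
    have hpi := hp i
    have hpq : 0 < p i + q i := by linarith
    have hub : p i ≤ R * q i := (div_le_iff₀ hqi).mp (hbd i).2
    rw [div_mul_div_comm, div_le_div_iff₀ (by positivity) hpq]
    nlinarith [sq_nonneg (p i - q i), mul_nonneg (sq_nonneg (p i - q i)) hqi.le,
      mul_nonneg (mul_nonneg (sq_nonneg (p i - q i)) hqi.le) (by nlinarith : (0:ℝ) ≤ (R+1)*((R+1)^2 - 4)),
      mul_nonneg (sq_nonneg (p i - q i)) (by linarith : (0:ℝ) ≤ R * q i - p i)]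
  · rw [Finset.mul_sum]
    apply Finset.sum_le_sum
    intro i _
    have hqi := hq i
    have hpi := hp i
    have hpq : 0 < p i + q i := by linarith
    have hlb : r * q i ≤ p i := (le_div_iff₀ hqi).mp (hbd i).1
    rw [div_mul_div_comm, div_le_div_iff₀ hpq (by positivity)]
    nlinarith [sq_nonneg (p i - q i),
      mul_nonneg (sq_nonneg (p i - q i)) (by nlinarith [mul_nonneg (mul_nonneg hqi.le (by linarith : (0:ℝ) ≤ r+1)) (by nlinarith : (0:ℝ) ≤ 4-(r+1)^2)] : (0:ℝ) ≤ 4*(p i + q i) - (r+1)^3 * q i)]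
end

section
/- For probability distributions P, Q with strictly positive entries, the triangular discrimination is bounded by the reversed Kullback–Leibler divergence: Δ(P‖Q) ≤ (32/27)·K(Q‖P), where K(Q‖P) = ∑ q_i ln(q_i/p_i). -/
/-! The whole inequality reduces to the one-variable bound
`27/32 · (t - 1)² / (t + 1) ≤ t - 1 - log t` for `t > 0`: with `t = p/q` and multiplied by `q`
it reads `27/32 · (p - q)² / (p + q) ≤ q log (q/p) + p - q`, and summing over the support the
terms `p - q` cancel because both distributions have mass one. The one-variable bound holds
since the difference of its two sides vanishes at `t = 1` and its derivative is `t - 1` times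
a positive function. -/

open Set Real

lemma le_of_hasDerivAt_nonpos_of_nonneg {f f' : ℝ → ℝ} {a c x : ℝ} (hac : a < c) (hax : a < x)
    (hf : ∀ y ∈ Ioi a, HasDerivAt f (f' y) y) (hf'_nonpos : ∀ y ∈ Ioo a c, f' y ≤ 0)
    (hf'_nonneg : ∀ y ∈ Ioi c, 0 ≤ f' y) : f c ≤ f x := by
  have hcont : ContinuousOn f (Ioi a) := fun y hy ↦ (hf y hy).continuousAt.continuousWithinAt
  rcases le_total x c with hxc | hcx
  · have : AntitoneOn f (Ioc a c) :=
      antitoneOn_of_hasDerivWithinAt_nonpos (convex_Ioc a c) (hcont.mono Ioc_subset_Ioi_self)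
        (fun y hy ↦ (hf y (interior_subset hy).1).hasDerivWithinAt)
        (fun y hy ↦ hf'_nonpos y (by rwa [interior_Ioc] at hy))
    exact this ⟨hax, hxc⟩ ⟨hac, le_rfl⟩ hxc
  · have : MonotoneOn f (Ici c) :=
      monotoneOn_of_hasDerivWithinAt_nonneg (convex_Ici c)
        (hcont.mono fun y hy ↦ hac.trans_le hy)
        (fun y hy ↦ (hf y (hac.trans_le (interior_subset hy))).hasDerivWithinAt)
        (fun y hy ↦ hf'_nonneg y (by rwa [interior_Ici] at hy))
    exact this self_mem_Ici hcx hcx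

lemma hasDerivAt_sub_one_sub_log_sub_sq_div {t : ℝ} (ht : 0 < t) :
    HasDerivAt (fun t ↦ t - 1 - log t - 27 / 32 * ((t - 1) ^ 2 / (t + 1)))
      ((t - 1) * ((5 * t ^ 2 - 17 * t + 32) / (32 * t * (t + 1) ^ 2))) t := by
  have hquot := (((hasDerivAt_id' t).sub_const 1).fun_pow 2).div
    ((hasDerivAt_id' t).add_const 1) (by positivity)
  refine ((((hasDerivAt_id' t).sub_const 1).sub (hasDerivAt_log ht.ne')).sub
    (hquot.const_mul (27 / 32))).congr_deriv ?_
  field_simp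
  ring

theorem sq_sub_one_div_add_one_le_sub_one_sub_log {t : ℝ} (ht : 0 < t) :
    27 / 32 * ((t - 1) ^ 2 / (t + 1)) ≤ t - 1 - log t := by
  have hpos : ∀ y : ℝ, 0 < y → 0 ≤ (5 * y ^ 2 - 17 * y + 32) / (32 * y * (y + 1) ^ 2) :=
    fun y hy ↦ by
      have : 0 < 5 * y ^ 2 - 17 * y + 32 := by nlinarith [sq_nonneg (y - 17 / 10)]
      positivity
  have hmin := le_of_hasDerivAt_nonpos_of_nonneg zero_lt_one ht
    (fun y hy ↦ hasDerivAt_sub_one_sub_log_sub_sq_div hy)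
    (fun y hy ↦ mul_nonpos_of_nonpos_of_nonneg (sub_nonpos.2 hy.2.le) (hpos y hy.1))
    (fun y hy ↦ mul_nonneg (sub_nonneg.2 hy.le) (hpos y (zero_lt_one.trans hy)))
  norm_num at hmin
  linarith

theorem sq_sub_div_add_le_mul_log_div_add_sub {a b : ℝ} (ha : 0 < a) (hb : 0 < b) :
    (a - b) ^ 2 / (a + b) ≤ 32 / 27 * (b * log (b / a) + (a - b)) := by
  have h := sq_sub_one_div_add_one_le_sub_one_sub_log (div_pos ha hb)
  rw [← neg_neg (log (a / b)), ← log_inv, inv_div] at h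
  have key : (a / b - 1) ^ 2 / (a / b + 1) = (a - b) ^ 2 / (a + b) / b := by
    field_simp
  rw [key, ← le_div_iff₀' (by norm_num), div_le_iff₀ hb] at h
  linarith [show (a / b - 1 + log (b / a)) * b = b * log (b / a) + (a - b) by field_simp; ring]

theorem sum_sq_sub_div_add_le_sum_mul_log_div {ι : Type*} (s : Finset ι) {p q : ι → ℝ}
    (hp : ∀ i ∈ s, 0 < p i) (hq : ∀ i ∈ s, 0 < q i) (hpq : ∑ i ∈ s, p i = ∑ i ∈ s, q i) :
    ∑ i ∈ s, (p i - q i) ^ 2 / (p i + q i) ≤ 32 / 27 * ∑ i ∈ s, q i * log (q i / p i) := by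
  calc ∑ i ∈ s, (p i - q i) ^ 2 / (p i + q i)
      ≤ ∑ i ∈ s, 32 / 27 * (q i * log (q i / p i) + (p i - q i)) :=
        Finset.sum_le_sum fun i hi ↦ sq_sub_div_add_le_mul_log_div_add_sub (hp i hi) (hq i hi)
    _ = 32 / 27 * ∑ i ∈ s, q i * log (q i / p i) := by
        rw [← Finset.mul_sum, Finset.sum_add_distrib, Finset.sum_sub_distrib, hpq, sub_self,
          add_zero]

theorem stmt_7 (n : ℕ) (p q : Fin n → ℝ)
    (hp : ∀ i, 0 < p i) (hq : ∀ i, 0 < q i)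
    (hp1 : ∑ i, p i = 1) (hq1 : ∑ i, q i = 1) :
    ∑ i, (p i - q i)^2 / (p i + q i) ≤
      32 / 27 * ∑ i, q i * Real.log (q i / p i) :=
  sum_sq_sub_div_add_le_sum_mul_log_div _ (fun i _ ↦ hp i) (fun i _ ↦ hq i) (hp1.trans hq1.symm)
end

section
/- For probability distributions P, Q with strictly positive entries, Δ(P‖Q) ≤ 4 h(P‖Q), where h(P‖Q) = (1/2) ∑ (√p_i − √q_i)² is the Hellinger discrimination. -/
theorem stmt_8 (n : ℕ) (p q : Fin n → ℝ)
    (hp : ∀ i, 0 < p i) (hq : ∀ i, 0 < q i)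
    (hp1 : ∑ i, p i = 1) (hq1 : ∑ i, q i = 1) :
    ∑ i, (p i - q i)^2 / (p i + q i) ≤
      4 * (1 / 2 * ∑ i, (Real.sqrt (p i) - Real.sqrt (q i))^2) := by
  have : 4 * (1 / 2 * ∑ i, (Real.sqrt (p i) - Real.sqrt (q i))^2)
      = ∑ i, 2 * (Real.sqrt (p i) - Real.sqrt (q i))^2 := by
    rw [Finset.mul_sum, Finset.mul_sum]; exact Finset.sum_congr rfl fun i _ => by ring
  rw [this]
  apply Finset.sum_le_sum
  intro i _
  have hpi := hp i
  have hqi := hq i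
  have ha : Real.sqrt (p i) ^ 2 = p i := Real.sq_sqrt hpi.le
  have hb : Real.sqrt (q i) ^ 2 = q i := Real.sq_sqrt hqi.le
  have ha0 : 0 < Real.sqrt (p i) := Real.sqrt_pos.mpr hpi
  have hb0 : 0 < Real.sqrt (q i) := Real.sqrt_pos.mpr hqi
  rw [div_le_iff₀ (by linarith)]
  nlinarith [sq_nonneg (Real.sqrt (p i) - Real.sqrt (q i)), sq_nonneg (Real.sqrt (p i) + Real.sqrt (q i)), sq_nonneg ((Real.sqrt (p i) - Real.sqrt (q i))^2)]
end

section
/- For probability distributions P, Q with strictly positive entries, Δ(P‖Q) ≤ (32/27)·K(P‖Q), where K(P‖Q) = ∑ p_i ln(p_i/q_i) is the Kullback–Leibler divergence. -/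
/-!
Writing `t = p/q`, the summands satisfy `(p - q)²/(p + q) = q (t - 1)²/(t + 1)` and
`p log(p/q) - p + q = q · klFun t` with `klFun t = t log t + 1 - t`. So it suffices that
`F t = 32/27 · klFun t - (t - 1)²/(t + 1)` is nonnegative on `t > 0`: it is convex there because
`F'' t = 32/(27 t) - 8/(t + 1)³ ≥ 0` (AM-GM, `27 t ≤ 4 (t + 1)³` with equality at `t = 1/2`),
and `F 1 = F' 1 = 0`. Summing over `i`, the terms `-p + q` cancel
since both distributions have mass 1.
-/

open Real Set InformationTheory

noncomputable def triangularKLGap (t : ℝ) : ℝ := 32 / 27 * klFun t - (t - 1) ^ 2 / (t + 1)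

lemma hasDerivAt_triangularKLGap {t : ℝ} (ht : 0 < t) :
    HasDerivAt triangularKLGap (32 / 27 * log t - 1 + 4 / (t + 1) ^ 2) t := by
  have ht1 : t + 1 ≠ 0 := by positivity
  have hquot : HasDerivAt (fun t : ℝ => (t - 1) ^ 2 / (t + 1)) (1 - 4 / (t + 1) ^ 2) t := by
    refine ((((hasDerivAt_id t).sub_const 1).fun_pow 2).div ((hasDerivAt_id t).add_const 1)
      ht1).congr_deriv ?_
    simp only [id_eq]
    field_simp
    ring
  exact (((hasDerivAt_klFun ht.ne').const_mul (32 / 27 : ℝ)).sub hquot).congr_deriv (by ring)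

lemma hasDerivAt_deriv_triangularKLGap {t : ℝ} (ht : 0 < t) :
    HasDerivAt (fun t => 32 / 27 * log t - 1 + 4 / (t + 1) ^ 2)
      (32 / (27 * t) - 8 / (t + 1) ^ 3) t := by
  have ht1 : t + 1 ≠ 0 := by positivity
  refine ((((hasDerivAt_log ht.ne').const_mul (32 / 27 : ℝ)).sub_const 1).add
    ((hasDerivAt_const t (4 : ℝ)).div (((hasDerivAt_id t).add_const 1).fun_pow 2)
      (pow_ne_zero 2 ht1))).congr_deriv ?_
  simp only [id_eq]
  field_simp
  ring

lemma mul_le_four_mul_add_one_pow_three {t : ℝ} (ht : 0 ≤ t) : 27 * t ≤ 4 * (t + 1) ^ 3 := by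
  nlinarith [mul_nonneg (sq_nonneg (2 * t - 1)) (by linarith : 0 ≤ t + 4)]

lemma convexOn_triangularKLGap : ConvexOn ℝ (Ioi 0) triangularKLGap := by
  refine convexOn_of_hasDerivWithinAt2_nonneg
    (f' := fun t => 32 / 27 * log t - 1 + 4 / (t + 1) ^ 2)
    (f'' := fun t => 32 / (27 * t) - 8 / (t + 1) ^ 3) (convex_Ioi 0)
    (fun t ht => (hasDerivAt_triangularKLGap ht).continuousAt.continuousWithinAt) ?_ ?_ ?_
  · rw [interior_Ioi]
    exact fun t ht => (hasDerivAt_triangularKLGap ht).hasDerivWithinAt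
  · rw [interior_Ioi]
    exact fun t ht => (hasDerivAt_deriv_triangularKLGap ht).hasDerivWithinAt
  · rw [interior_Ioi]
    intro t (ht : 0 < t)
    rw [sub_nonneg, div_le_div_iff₀ (by positivity) (by positivity)]
    linarith [mul_le_four_mul_add_one_pow_three ht.le]

lemma triangularKLGap_nonneg {t : ℝ} (ht : 0 < t) : 0 ≤ triangularKLGap t := by
  have hderiv : derivWithin triangularKLGap (Ioi 1) 1 = 0 := by
    rw [(hasDerivAt_triangularKLGap (t := 1) one_pos).hasDerivWithinAt.derivWithin
      (uniqueDiffWithinAt_Ioi (1 : ℝ))]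
    norm_num
  have hmin := convexOn_triangularKLGap.isMinOn_of_rightDeriv_eq_zero
    (by rw [interior_Ioi]; exact mem_Ioi.2 one_pos) hderiv ht
  simpa [triangularKLGap, klFun_one] using hmin

lemma sq_sub_div_add_le_mul_log_div {a b : ℝ} (ha : 0 < a) (hb : 0 < b) :
    (a - b) ^ 2 / (a + b) ≤ 32 / 27 * (a * log (a / b) - a + b) := by
  have hgap := mul_nonneg hb.le (triangularKLGap_nonneg (div_pos ha hb))
  have hquot : b * ((a / b - 1) ^ 2 / (a / b + 1)) = (a - b) ^ 2 / (a + b) := by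
    field_simp
  have hkl : b * klFun (a / b) = a * log (a / b) - a + b := by
    rw [klFun_apply]
    field_simp
    ring
  rw [triangularKLGap, mul_sub, hquot, ← mul_assoc, mul_comm b, mul_assoc, hkl] at hgap
  linarith

theorem stmt_9 (n : ℕ) (p q : Fin n → ℝ)
    (hp : ∀ i, 0 < p i) (hq : ∀ i, 0 < q i)
    (hp1 : ∑ i, p i = 1) (hq1 : ∑ i, q i = 1) :
    ∑ i, (p i - q i)^2 / (p i + q i) ≤
      32 / 27 * ∑ i, p i * Real.log (p i / q i) := by
  calc ∑ i, (p i - q i) ^ 2 / (p i + q i)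
      ≤ ∑ i, 32 / 27 * (p i * log (p i / q i) - p i + q i) :=
        Finset.sum_le_sum fun i _ => sq_sub_div_add_le_mul_log_div (hp i) (hq i)
    _ = 32 / 27 * (∑ i, p i * log (p i / q i) - ∑ i, p i + ∑ i, q i) := by
        rw [← Finset.mul_sum, Finset.sum_add_distrib, Finset.sum_sub_distrib]
    _ = 32 / 27 * ∑ i, p i * Real.log (p i / q i) := by
        rw [hp1, hq1]
        ring
end

section
/- For probability distributions P, Q with strictly positive entries, 1 − W(P‖Q) ≤ (16/27) K(P‖Q), where W(P‖Q) = ∑ 2p_i q_i/(p_i + q_i) and K(P‖Q) = ∑ p_i ln(p_i/q_i). -/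
/-- `sinh w ≤ w * cosh w` for `w ≥ 0`. -/
lemma aux_sinh_le_mul_cosh {w : ℝ} (hw : 0 ≤ w) : Real.sinh w ≤ w * Real.cosh w := by
  have hmono : MonotoneOn (fun t => t * Real.cosh t - Real.sinh t) (Set.Ici (0:ℝ)) := by
    have hd : ∀ t : ℝ, HasDerivAt (fun t => t * Real.cosh t - Real.sinh t)
        (1 * Real.cosh t + t * Real.sinh t - Real.cosh t) t := fun t =>
      ((hasDerivAt_id t).mul (Real.hasDerivAt_cosh t)).sub (Real.hasDerivAt_sinh t)
    apply monotoneOn_of_deriv_nonneg (convex_Ici 0)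
    · exact ((continuous_id.mul Real.continuous_cosh).sub Real.continuous_sinh).continuousOn
    · intro t _
      exact (hd t).differentiableAt.differentiableWithinAt
    · intro t ht
      rw [interior_Ici, Set.mem_Ioi] at ht
      rw [(hd t).deriv]
      have hs : 0 ≤ Real.sinh t := Real.sinh_nonneg_iff.mpr ht.le
      nlinarith
  have h := hmono (Set.self_mem_Ici) (Set.mem_Ici.mpr hw) hw
  simp only [Real.sinh_zero, Real.cosh_zero, mul_one, zero_mul, sub_zero, zero_sub] at h
  linarith

/-- Polynomial positivity certificate (Bernstein basis, degree 10). -/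
lemma aux_poly {s : ℝ} (h0 : 0 ≤ s) (h1 : s ≤ 1) :
    0 ≤ 64*s^7 + 69*s^6 + 10*s^5 - 49*s^4 - 44*s^3 + 15*s^2 + 10*s + 5 := by
  have u := sub_nonneg.mpr h1
  have t0 : (0:ℝ) ≤ (1-s)^10 := by positivity
  have t1 : (0:ℝ) ≤ s^1*(1-s)^9 := by positivity
  have t2 : (0:ℝ) ≤ s^2*(1-s)^8 := by positivity
  have t3 : (0:ℝ) ≤ s^3*(1-s)^7 := by positivity
  have t4 : (0:ℝ) ≤ s^4*(1-s)^6 := by positivity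
  have t5 : (0:ℝ) ≤ s^5*(1-s)^5 := by positivity
  have t6 : (0:ℝ) ≤ s^6*(1-s)^4 := by positivity
  have t7 : (0:ℝ) ≤ s^7*(1-s)^3 := by positivity
  have t8 : (0:ℝ) ≤ s^8*(1-s)^2 := by positivity
  have t9 : (0:ℝ) ≤ s^9*(1-s)^1 := by positivity
  have t10 : (0:ℝ) ≤ s^10 := by positivity
  nlinarith [t0, t1, t2, t3, t4, t5, t6, t7, t8, t9, t10]

/-- Cleared form of the key pointwise inequality. -/
lemma aux_key_cleared {x : ℝ} (hx : 0 < x) :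
    27*(x-1)^2 ≤ 32*(x+1)*(x*Real.log x - x + 1) := by
  rcases le_total x 1 with hx1 | hx1
  · -- case 0 < x ≤ 1, use s = x^(1/4)
    set s : ℝ := x ^ ((1:ℝ)/4) with hs_def
    have hspos : 0 < s := Real.rpow_pos_of_pos hx _
    have hs1 : s ≤ 1 := Real.rpow_le_one hx.le hx1 (by norm_num)
    have hs4 : s ^ (4:ℕ) = x := by
      rw [hs_def, ← Real.rpow_natCast (x ^ ((1:ℝ)/4)) 4, ← Real.rpow_mul hx.le]
      norm_num
    have hlogs : Real.log s = Real.log x / 4 := by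
      rw [hs_def, Real.log_rpow hx]; ring
    -- log s ≥ (s - s⁻¹)/2 from w ≤ sinh w at w = -log s
    have hw : 0 ≤ -Real.log s := by
      have := Real.log_nonpos hspos.le hs1
      linarith
    have hsinh : -Real.log s ≤ Real.sinh (-Real.log s) := Real.self_le_sinh_iff.mpr hw
    rw [Real.sinh_neg, Real.sinh_log hspos] at hsinh
    have hsinv : s * s⁻¹ = 1 := mul_inv_cancel₀ hspos.ne'
    -- s * log x ≥ 2*(s^2 - 1)
    have hL : 2*(s^2 - 1) ≤ s * Real.log x := by
      have h2 : (s - s⁻¹)/2 ≤ Real.log s := by linarith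
      have h3 : s * ((s - s⁻¹)/2) ≤ s * Real.log s :=
        mul_le_mul_of_nonneg_left h2 hspos.le
      have h4 : s * ((s - s⁻¹)/2) = (s^2 - 1)/2 := by
        field_simp
      rw [hlogs] at h3
      rw [h4] at h3
      linarith
    obtain ⟨L, hLdef⟩ : ∃ L, Real.log x = L := ⟨_, rfl⟩
    rw [hLdef] at hL ⊢
    rw [← hs4]
    have hQ : 0 ≤ (s-1)^2 * (64*s^7 + 69*s^6 + 10*s^5 - 49*s^4 - 44*s^3 + 15*s^2 + 10*s + 5) :=
      mul_nonneg (sq_nonneg _) (aux_poly hspos.le hs1)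
    have hprod : 0 ≤ 32*(s^4+1)*s^3 * (s * L - 2*(s^2-1)) :=
      mul_nonneg (by positivity) (by linarith)
    nlinarith [hQ, hprod]
  · -- case x ≥ 1, use t = sqrt x
    set t : ℝ := Real.sqrt x with ht_def
    have htpos : 0 < t := Real.sqrt_pos.mpr hx
    have ht2 : t ^ (2:ℕ) = x := Real.sq_sqrt hx.le
    have htinv : t * t⁻¹ = 1 := mul_inv_cancel₀ htpos.ne'
    have hwt : 0 ≤ Real.log t := Real.log_nonneg (by nlinarith)
    have hsinh := aux_sinh_le_mul_cosh hwt
    rw [Real.sinh_log htpos, Real.cosh_log htpos] at hsinh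
    have hlogx : Real.log x = 2 * Real.log t := by
      rw [← ht2, Real.log_pow]; push_cast; ring
    -- (t^2 - 1) ≤ log t * (t^2 + 1)
    have hL : t^2 - 1 ≤ Real.log t * (t^2 + 1) := by
      have h3 : t * ((t - t⁻¹)/2) ≤ t * (Real.log t * ((t + t⁻¹)/2)) :=
        mul_le_mul_of_nonneg_left hsinh htpos.le
      have h4 : t * ((t - t⁻¹)/2) = (t^2 - 1)/2 := by field_simp
      have h5 : t * (Real.log t * ((t + t⁻¹)/2)) = Real.log t * (t^2 + 1)/2 := by
        field_simp
      rw [h4, h5] at h3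
      linarith
    obtain ⟨L, hLdef⟩ : ∃ L, Real.log x = L := ⟨_, rfl⟩
    rw [hLdef] at hlogx ⊢
    rw [← ht2, hlogx]
    have hprod : 0 ≤ 64*t^2 * (Real.log t * (t^2+1) - (t^2 - 1)) :=
      mul_nonneg (by positivity) (by linarith)
    nlinarith [hprod, sq_nonneg (t^2 - 1)]

/-- Per-index inequality. -/
lemma aux_perindex {a b : ℝ} (ha : 0 < a) (hb : 0 < b) :
    (a - b)^2 / (2*(a + b)) ≤ 16/27 * (a * Real.log (a/b) - a + b) := by
  obtain ⟨c, hc⟩ : ∃ c, Real.log (a/b) = c := ⟨_, rfl⟩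
  rw [hc]
  have h := aux_key_cleared (x := a/b) (div_pos ha hb)
  rw [hc] at h
  have hb' : b ≠ 0 := hb.ne'
  have h2 : 27*(a-b)^2 ≤ 32*(a+b)*(a*c - a + b) := by
    have h3 := mul_le_mul_of_nonneg_right h (le_of_lt (by positivity : (0:ℝ) < b^2))
    have e1 : 27*(a/b-1)^2 * b^2 = 27*(a-b)^2 := by
      field_simp
    have e2 : 32*(a/b+1)*((a/b)*c - a/b + 1) * b^2 = 32*(a+b)*(a*c - a + b) := by
      field_simp
    rw [e1, e2] at h3
    exact h3
  rw [div_le_iff₀ (by positivity)]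
  nlinarith [h2]

theorem stmt_11 (n : ℕ) (p q : Fin n → ℝ)
    (hp : ∀ i, 0 < p i) (hq : ∀ i, 0 < q i)
    (hp1 : ∑ i, p i = 1) (hq1 : ∑ i, q i = 1) :
    1 - ∑ i, 2 * p i * q i / (p i + q i) ≤
      16 / 27 * ∑ i, p i * Real.log (p i / q i) := by
  have hsum : ∑ i, (p i - q i)^2 / (2*(p i + q i))
      ≤ ∑ i, 16/27 * (p i * Real.log (p i / q i) - p i + q i) :=
    Finset.sum_le_sum (fun i _ => aux_perindex (hp i) (hq i))
  have e1 : ∑ i, (p i - q i)^2 / (2*(p i + q i))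
      = 1 - ∑ i, 2 * p i * q i / (p i + q i) := by
    have hpt : ∀ i, (p i - q i)^2 / (2*(p i + q i))
        = (p i + q i)/2 - 2 * p i * q i / (p i + q i) := by
      intro i
      have h : (0:ℝ) < p i + q i := by have := hp i; have := hq i; linarith
      field_simp
      ring
    rw [Finset.sum_congr rfl (fun i _ => hpt i), Finset.sum_sub_distrib]
    have : ∑ i, (p i + q i)/2 = 1 := by
      rw [← Finset.sum_div, Finset.sum_add_distrib, hp1, hq1]
      norm_num
    rw [this]
  have e2 : ∑ i, 16/27 * (p i * Real.log (p i / q i) - p i + q i)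
      = 16/27 * ∑ i, p i * Real.log (p i / q i) := by
    rw [← Finset.mul_sum]
    congr 1
    rw [Finset.sum_add_distrib, Finset.sum_sub_distrib, hp1, hq1]
    ring
  rw [e1, e2] at hsum
  exact hsum
end

section
/- If P, Q are probability distributions with positive entries satisfying 0 < r ≤ p_i/q_i ≤ R for all i, with r ≤ 1 ≤ R, then (r³+1)·χ²(Q‖P) ≤ Ψ(P‖Q) ≤ (R³+1)·χ²(Q‖P). -/
theorem stmt_14 (n : ℕ) (p q : Fin n → ℝ) (r R : ℝ)
    (hp : ∀ i, 0 < p i) (hq : ∀ i, 0 < q i)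
    (hp1 : ∑ i, p i = 1) (hq1 : ∑ i, q i = 1)
    (hr : 0 < r) (hr1 : r ≤ 1) (hR1 : 1 ≤ R)
    (hbd : ∀ i, r ≤ p i / q i ∧ p i / q i ≤ R) :
    (r^3 + 1) * ∑ i, (q i - p i)^2 / p i ≤
      ∑ i, (p i - q i)^2 * (p i + q i) / (p i * q i) ∧
    ∑ i, (p i - q i)^2 * (p i + q i) / (p i * q i) ≤
      (R^3 + 1) * ∑ i, (q i - p i)^2 / p i := by
  constructor
  · rw [Finset.mul_sum]
    apply Finset.sum_le_sum
    intro i _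
    have hpi := hp i; have hqi := hq i
    have h1 : r ≤ p i / q i := (hbd i).1
    have h2 : r * q i ≤ p i := by
      have := (le_div_iff₀ hqi).mp h1; linarith
    have hr3 : r^3 ≤ r := by nlinarith [sq_nonneg r]
    have h3 : r^3 * q i ≤ p i := by nlinarith
    rw [mul_div_assoc', div_le_div_iff₀ (by positivity) (by positivity)]
    nlinarith [sq_nonneg (q i - p i), mul_pos hpi hqi, mul_nonneg (sq_nonneg (q i - p i)) (sub_nonneg.mpr h3)]
  · rw [Finset.mul_sum]
    apply Finset.sum_le_sum
    intro i _
    have hpi := hp i; have hqi := hq i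
    have h1 : p i / q i ≤ R := (hbd i).2
    have h2 : p i ≤ R * q i := by rwa [div_le_iff₀ hqi] at h1
    have hR3 : R ≤ R^3 := by nlinarith [sq_nonneg R]
    have h3 : p i ≤ R^3 * q i := by nlinarith
    rw [mul_div_assoc', div_le_div_iff₀ (by positivity) (by positivity)]
    nlinarith [sq_nonneg (q i - p i), mul_pos hpi hqi, mul_nonneg (sq_nonneg (q i - p i)) (sub_nonneg.mpr h3)]
end

section
/- If P, Q are probability distributions with positive entries satisfying 0 < r ≤ p_i/q_i ≤ R for all i, with r ≤ 1 ≤ R, then ((R³+1)/R³)·χ²(P‖Q) ≤ Ψ(P‖Q) ≤ ((r³+1)/r³)·χ²(P‖Q). -/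
theorem stmt_15 (n : ℕ) (p q : Fin n → ℝ) (r R : ℝ)
    (hp : ∀ i, 0 < p i) (hq : ∀ i, 0 < q i)
    (hp1 : ∑ i, p i = 1) (hq1 : ∑ i, q i = 1)
    (hr : 0 < r) (hr1 : r ≤ 1) (hR1 : 1 ≤ R)
    (hbd : ∀ i, r ≤ p i / q i ∧ p i / q i ≤ R) :
    (R^3 + 1) / R^3 * ∑ i, (p i - q i)^2 / q i ≤
      ∑ i, (p i - q i)^2 * (p i + q i) / (p i * q i) ∧
    ∑ i, (p i - q i)^2 * (p i + q i) / (p i * q i) ≤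
      (r^3 + 1) / r^3 * ∑ i, (p i - q i)^2 / q i := by
  have hR : (0:ℝ) < R := lt_of_lt_of_le one_pos hR1
  constructor
  · rw [Finset.mul_sum]
    apply Finset.sum_le_sum
    intro i _
    have hpi := hp i; have hqi := hq i
    have h1 : p i ≤ R * q i := (div_le_iff₀ hqi).mp (hbd i).2
    have hR3 : R ≤ R^3 := by nlinarith [mul_nonneg (mul_nonneg hR.le (sub_nonneg.mpr hR1)) (by linarith : (0:ℝ) ≤ 1 + R)]
    have h2 : p i ≤ R^3 * q i := le_trans h1 (mul_le_mul_of_nonneg_right hR3 hqi.le)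
    rw [div_mul_div_comm, div_le_div_iff₀ (by positivity) (by positivity)]
    nlinarith [sq_nonneg (p i - q i), mul_nonneg (sq_nonneg (p i - q i)) hqi.le,
      mul_nonneg (mul_nonneg (sq_nonneg (p i - q i)) hqi.le) (sub_nonneg.mpr h2)]
  · rw [Finset.mul_sum]
    apply Finset.sum_le_sum
    intro i _
    have hpi := hp i; have hqi := hq i
    have h1 : r * q i ≤ p i := (le_div_iff₀ hqi).mp (hbd i).1
    have hr3 : r^3 ≤ r := by nlinarith [mul_nonneg (mul_nonneg hr.le (sub_nonneg.mpr hr1)) (by linarith : (0:ℝ) ≤ 1 + r)]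
    have h2 : r^3 * q i ≤ p i := le_trans (mul_le_mul_of_nonneg_right hr3 hqi.le) h1
    rw [div_mul_div_comm, div_le_div_iff₀ (by positivity) (by positivity)]
    nlinarith [sq_nonneg (p i - q i), mul_nonneg (sq_nonneg (p i - q i)) hqi.le,
      mul_nonneg (mul_nonneg (sq_nonneg (p i - q i)) hqi.le) (sub_nonneg.mpr h2)]
end

section
/- For probability distributions P, Q with strictly positive entries, 3·2^{1/3}·K(Q‖P) ≤ Ψ(P‖Q), where K(Q‖P) = ∑ q_i ln(q_i/p_i) and Ψ(P‖Q) = ∑ (p_i − q_i)²(p_i + q_i)/(p_i q_i). -/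
/-!
With `t = q_i / p_i`, the `i`-th summands of `K(Q‖P)` (after adding `p_i - q_i`, which sums to
zero) and of `Ψ(P‖Q)` are `p_i · klFun t` and `p_i · (t - 1)² (t + 1) / t`. The difference
`g t = (t - 1)² (t + 1) / t - a · klFun t` vanishes together with its derivative at `t = 1`, and
`g'' t = 2 + 2 / t³ - a / t` is nonnegative as soon as `a t² ≤ 2 t³ + 2`; for `a = 3 · 2^{1/3}` this
is AM-GM. So `g` is convex on `(0, ∞)` with minimum `0` at `1`.
-/

open Real InformationTheory Finset Set

lemma three_mul_cbrt_two_mul_sq_le {t : ℝ} (ht : 0 ≤ t) :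
    3 * (2:ℝ) ^ ((1:ℝ) / 3) * t ^ 2 ≤ 2 * t ^ 3 + 2 := by
  set s := (2:ℝ) ^ ((1:ℝ) / 3)
  have hs3 : s ^ 3 = 2 := by
    rw [← rpow_natCast, ← rpow_mul zero_le_two]
    norm_num
  -- AM-GM with equality at `t = s`: `2 t³ + s³ - 3 s t² = (t - s)² (2 t + s)`.
  nlinarith [mul_nonneg (sq_nonneg (t - s)) (by positivity : 0 ≤ 2 * t + s)]

section

variable {a : ℝ}

lemma hasDerivAt_sub_mul_klFun {t : ℝ} (ht : t ≠ 0) :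
    HasDerivAt (fun t ↦ (t - 1) ^ 2 * (t + 1) / t - a * klFun t)
      (2 * t - 1 - (t ^ 2)⁻¹ - a * log t) t := by
  have := (((((hasDerivAt_id' t).sub_const 1).pow 2).mul ((hasDerivAt_id' t).add_const 1)).div
    (hasDerivAt_id' t) ht).sub ((hasDerivAt_klFun ht).const_mul a)
  refine this.congr_deriv ?_
  simp only [Pi.pow_apply, Pi.mul_apply]
  field_simp
  ring

lemma hasDerivAt_two_mul_sub_one_sub_inv_sq_sub_mul_log {t : ℝ} (ht : t ≠ 0) :
    HasDerivAt (fun t ↦ 2 * t - 1 - (t ^ 2)⁻¹ - a * log t) (2 + 2 * (t ^ 3)⁻¹ - a * t⁻¹) t := by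
  have := ((((hasDerivAt_id' t).const_mul 2).sub_const 1).sub
    (((hasDerivAt_id' t).pow 2).inv (pow_ne_zero 2 ht))).sub ((hasDerivAt_log ht).const_mul a)
  refine this.congr_deriv ?_
  simp only [Pi.pow_apply]
  field_simp
  ring

lemma convexOn_sub_mul_klFun (ha : ∀ t, 0 < t → a * t ^ 2 ≤ 2 * t ^ 3 + 2) :
    ConvexOn ℝ (Ioi 0) fun t ↦ (t - 1) ^ 2 * (t + 1) / t - a * klFun t := by
  refine convexOn_of_hasDerivWithinAt2_nonneg (convex_Ioi 0)
    (fun t ht ↦ (hasDerivAt_sub_mul_klFun (ne_of_gt ht)).continuousAt.continuousWithinAt)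
    (fun t ht ↦ (hasDerivAt_sub_mul_klFun (ne_of_gt (interior_subset ht))).hasDerivWithinAt)
    (fun t ht ↦ (hasDerivAt_two_mul_sub_one_sub_inv_sq_sub_mul_log
      (ne_of_gt (interior_subset ht))).hasDerivWithinAt) fun t ht ↦ ?_
  rw [interior_Ioi] at ht
  have ht : 0 < t := ht
  have h : 2 + 2 * (t ^ 3)⁻¹ - a * t⁻¹ = (2 * t ^ 3 + 2 - a * t ^ 2) / t ^ 3 := by
    field_simp
  rw [h]
  exact div_nonneg (by linarith [ha t ht]) (by positivity)

lemma mul_klFun_le (ha : ∀ t, 0 < t → a * t ^ 2 ≤ 2 * t ^ 3 + 2) {t : ℝ} (ht : 0 < t) :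
    a * klFun t ≤ (t - 1) ^ 2 * (t + 1) / t := by
  have hderiv : derivWithin (fun t ↦ (t - 1) ^ 2 * (t + 1) / t - a * klFun t) (Ioi 1) 1 = 0 := by
    rw [(hasDerivAt_sub_mul_klFun one_ne_zero).hasDerivWithinAt.derivWithin
      (uniqueDiffWithinAt_Ioi 1)]
    norm_num
  have hmin := (convexOn_sub_mul_klFun ha).isMinOn_of_rightDeriv_eq_zero (by simp) hderiv ht
  simpa [klFun_one] using hmin

lemma mul_log_div_add_sub_le (ha : ∀ t, 0 < t → a * t ^ 2 ≤ 2 * t ^ 3 + 2) {p q : ℝ}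
    (hp : 0 < p) (hq : 0 < q) :
    a * (q * log (q / p) + p - q) ≤ (p - q) ^ 2 * (p + q) / (p * q) := by
  calc a * (q * log (q / p) + p - q) = p * (a * klFun (q / p)) := by
        rw [klFun_apply]
        field_simp
    _ ≤ p * ((q / p - 1) ^ 2 * (q / p + 1) / (q / p)) :=
        mul_le_mul_of_nonneg_left (mul_klFun_le ha (div_pos hq hp)) hp.le
    _ = (p - q) ^ 2 * (p + q) / (p * q) := by
        field_simp
        ring

end

theorem stmt_16 (n : ℕ) (p q : Fin n → ℝ)
    (hp : ∀ i, 0 < p i) (hq : ∀ i, 0 < q i)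
    (hp1 : ∑ i, p i = 1) (hq1 : ∑ i, q i = 1) :
    3 * (2:ℝ)^((1:ℝ)/3) * ∑ i, q i * Real.log (q i / p i) ≤
      ∑ i, (p i - q i)^2 * (p i + q i) / (p i * q i) := by
  have hK : ∑ i, q i * log (q i / p i) = ∑ i, (q i * log (q i / p i) + p i - q i) := by
    simp only [sum_sub_distrib, sum_add_distrib, hp1, hq1, add_sub_cancel_right]
  rw [hK, mul_sum]
  exact sum_le_sum fun i _ ↦
    mul_log_div_add_sub_le (fun t ht ↦ three_mul_cbrt_two_mul_sq_le ht.le) (hp i) (hq i)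
end

section
/- For probability distributions P, Q with strictly positive entries, 16 h(P‖Q) ≤ Ψ(P‖Q), where h(P‖Q) = (1/2)∑(√p_i − √q_i)² and Ψ(P‖Q) = ∑ (p_i − q_i)²(p_i + q_i)/(p_i q_i). -/
theorem stmt_17 (n : ℕ) (p q : Fin n → ℝ)
    (hp : ∀ i, 0 < p i) (hq : ∀ i, 0 < q i)
    (hp1 : ∑ i, p i = 1) (hq1 : ∑ i, q i = 1) :
    16 * (1 / 2 * ∑ i, (Real.sqrt (p i) - Real.sqrt (q i))^2) ≤
      ∑ i, (p i - q i)^2 * (p i + q i) / (p i * q i) := by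
  rw [Finset.mul_sum, Finset.mul_sum]
  apply Finset.sum_le_sum
  intro i _
  set a := Real.sqrt (p i) with ha
  set b := Real.sqrt (q i) with hb
  have hap : 0 < a := Real.sqrt_pos.mpr (hp i)
  have hbp : 0 < b := Real.sqrt_pos.mpr (hq i)
  have ha2 : a ^ 2 = p i := Real.sq_sqrt (hp i).le
  have hb2 : b ^ 2 = q i := Real.sq_sqrt (hq i).le
  rw [← ha2, ← hb2, le_div_iff₀ (by positivity)]
  nlinarith [sq_nonneg ((a-b)*(a^2-b^2)), mul_nonneg (mul_pos hap hbp).le (sq_nonneg ((a-b)^2)), mul_pos hap hbp]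
end

section
/- For probability distributions P, Q with strictly positive entries, 3·2^{1/3}·K(P‖Q) ≤ Ψ(P‖Q), where K(P‖Q) = ∑ p_i ln(p_i/q_i) and Ψ(P‖Q) = ∑ (p_i − q_i)²(p_i + q_i)/(p_i q_i). -/
/-!
Because `∑ p = ∑ q`, `c · K(P‖Q) = ∑ c (p log (p/q) - p + q)`, so it suffices to compare summands;
with `x = p / q` this is `c (x log x - x + 1) ≤ (x - 1)² (x + 1) / x` for `x > 0`.
Divided by `x²`, the difference of the two sides has derivative `(x - 1)(x² - (c - 1) x + 2) / x³`,
free of `log`, and its quadratic factor is nonnegative whenever `(c - 1)² ≤ 8`. The difference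
is then minimal at `x = 1`, where it vanishes. Finally `c = 3 · 2^(1/3)` satisfies `(c - 1)² ≤ 8`.
-/

open Real Set Finset

lemma hasDerivAt_psi_sub_mul_kl (c : ℝ) {x : ℝ} (hx : x ≠ 0) :
    HasDerivAt (fun x => (x - 1) ^ 2 * (x + 1) / x ^ 2 - c * (log x - 1 + x⁻¹))
      ((x - 1) * (x ^ 2 - (c - 1) * x + 2) / x ^ 3) x := by
  have hpoly : HasDerivAt (fun x : ℝ => (x - 1) ^ 2 * (x + 1))
      (2 * (x - 1) * (x + 1) + (x - 1) ^ 2) x :=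
    ((((hasDerivAt_id x).sub_const 1).pow 2).mul ((hasDerivAt_id x).add_const 1)).congr_deriv
      (by simp only [id_eq, Pi.pow_apply, Nat.cast_ofNat]; ring)
  refine ((hpoly.div (hasDerivAt_pow 2 x) (pow_ne_zero 2 hx)).sub
    ((((hasDerivAt_log hx).sub_const 1).add (hasDerivAt_inv hx)).const_mul c)).congr_deriv ?_
  field_simp
  ring

lemma psi_sub_mul_kl_nonneg {c x : ℝ} (hc : (c - 1) ^ 2 ≤ 8) (hx : 0 < x) :
    0 ≤ (x - 1) ^ 2 * (x + 1) / x ^ 2 - c * (log x - 1 + x⁻¹) := by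
  set f := fun y : ℝ => (y - 1) ^ 2 * (y + 1) / y ^ 2 - c * (log y - 1 + y⁻¹)
  have hf : ∀ y, 0 < y → HasDerivAt f ((y - 1) * (y ^ 2 - (c - 1) * y + 2) / y ^ 3) y :=
    fun y hy => hasDerivAt_psi_sub_mul_kl c hy.ne'
  have hquad (y : ℝ) : 0 ≤ y ^ 2 - (c - 1) * y + 2 := by
    nlinarith [sq_nonneg (y - (c - 1) / 2)]
  have hmin : IsMinOn f (Ioi 0) 1 := by
    apply isMinOn_Ioi_of_deriv (hf 1 one_pos).continuousAt
    · exact fun y hy => (hf y hy.1).differentiableAt.differentiableWithinAt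
    · exact fun y hy => (hf y (one_pos.trans hy)).differentiableAt.differentiableWithinAt
    · intro y ⟨hy0, hy1⟩
      rw [(hf y hy0).deriv]
      exact div_nonpos_of_nonpos_of_nonneg
        (mul_nonpos_of_nonpos_of_nonneg (by linarith) (hquad y)) (by positivity)
    · intro y (hy1 : 1 < y)
      rw [(hf y (one_pos.trans hy1)).deriv]
      exact div_nonneg (mul_nonneg (by linarith) (hquad y)) (by positivity)
  simpa [f] using hmin hx

lemma mul_klSummand_le_psiSummand {c p q : ℝ} (hc : (c - 1) ^ 2 ≤ 8) (hp : 0 < p) (hq : 0 < q) :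
    c * (p * log (p / q) - p + q) ≤ (p - q) ^ 2 * (p + q) / (p * q) := by
  have h := mul_nonneg hp.le (psi_sub_mul_kl_nonneg hc (div_pos hp hq))
  have e : p * ((p / q - 1) ^ 2 * (p / q + 1) / (p / q) ^ 2 - c * (log (p / q) - 1 + (p / q)⁻¹))
      = (p - q) ^ 2 * (p + q) / (p * q) - c * (p * log (p / q) - p + q) := by
    field_simp
  linarith

lemma sq_three_mul_cbrt_two_sub_one_le : (3 * (2 : ℝ) ^ ((1 : ℝ) / 3) - 1) ^ 2 ≤ 8 := by
  set a := (2 : ℝ) ^ ((1 : ℝ) / 3)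
  have hcube : a ^ 3 = 2 := by
    rw [← rpow_natCast, ← rpow_mul (by norm_num)]; norm_num
  have ha : 0 < a := by positivity
  nlinarith [sq_nonneg (a - 1)]

theorem stmt_18 (n : ℕ) (p q : Fin n → ℝ)
    (hp : ∀ i, 0 < p i) (hq : ∀ i, 0 < q i)
    (hp1 : ∑ i, p i = 1) (hq1 : ∑ i, q i = 1) :
    3 * (2:ℝ)^((1:ℝ)/3) * ∑ i, p i * Real.log (p i / q i) ≤
      ∑ i, (p i - q i)^2 * (p i + q i) / (p i * q i) := by
  calc 3 * (2:ℝ)^((1:ℝ)/3) * ∑ i, p i * Real.log (p i / q i)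
      = ∑ i, 3 * (2:ℝ)^((1:ℝ)/3) * (p i * log (p i / q i) - p i + q i) := by
        rw [← mul_sum, sum_add_distrib, sum_sub_distrib, hp1, hq1]; ring
    _ ≤ ∑ i, (p i - q i)^2 * (p i + q i) / (p i * q i) :=
        sum_le_sum fun i _ =>
          mul_klSummand_le_psiSummand sq_three_mul_cbrt_two_sub_one_le (hp i) (hq i)
end
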